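/- For a word v with |v| divisible by d, suppose π_d(v) divides |y|, |y| divides d, and xyz belongs to the ⊑_d-downward closure of {vᵏw : k ≥ 0} where w is the length-r prefix of v. Then for every ℓ ∈ ℕ, the word x y^{1 + ℓ·d/|y|} z also belongs to this downward closure. -/

import Mathlib

/-- `kappa d w i` is the set of letters occurring in `w` at (1-based) positions
congruent to `i` modulo `d`. -/
def kappa {A : Type*} (d : ℕ) (w : List A) (i : ℕ) : Set A :=
  {a | ∃ p : ℕ, w[p]? = some a ∧ (p + 1) % d = i % d}

/-- `ModEmb d u v` : `u` embeds into `v` by a strictly monotone, letter-preserving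
map that preserves positions modulo `d`, and `|u| ≡ |v| (mod d)`. -/
def ModEmb {A : Type*} (d : ℕ) (u v : List A) : Prop :=
  u.length % d = v.length % d ∧
    ∃ α : Fin u.length → Fin v.length, StrictMono α ∧
      (∀ i, u.get i = v.get (α i)) ∧
      (∀ i : Fin u.length, ((α i : ℕ)) % d = ((i : ℕ)) % d)

/-- Downward closure of a set of words with respect to `ModEmb d`. -/
def dclMod {A : Type*} (d : ℕ) (S : Set (List A)) : Set (List A) :=
  {u | ∃ v ∈ S, ModEmb d u v}

/-- The `k`-th power of a word. -/
def wpow {A : Type*} (v : List A) (k : ℕ) : List A :=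
  (List.replicate k v).flatten

/-- `π_d(v)`: the smallest `t ≥ 1` dividing `d` such that
`κ_d(v)(i + t) = κ_d(v)(i)` for all `i ∈ [1, d - t]`. -/
noncomputable def piD {A : Type*} (d : ℕ) (v : List A) : ℕ :=
  sInf {t | t ∣ d ∧ 1 ≤ t ∧ ∀ i : ℕ, 1 ≤ i → i + t ≤ d →
    kappa d v (i + t) = kappa d v i}

/-!
Cut an embedding of `x ++ y ++ z` into `vᵏ w` right after the image of `y`. Inserting
`n` copies of `v`, rotated so that they continue the periodic pattern of `vᵏ w`, at the cut gives
`vᵏ⁺ⁿ w`; the `n = l * d` extra letters of `y ^ (1 + l * d / |y|)` go one per inserted copy.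
The letter needed at absolute position `|x| + |y| + j` is `y[j mod |y|]`, which the given embedding
places in `v` at residue `|x| + (j mod |y|)`; since `κ_d(v)` is `π_d(v)`-periodic and
`π_d(v) ∣ |y|`, it also occurs at the required residue.
-/

open Function

section Words

variable {A : Type*}

theorem wpow_length (v : List A) (k : ℕ) : (wpow v k).length = k * v.length := by
  simp [wpow]

theorem wpow_one (v : List A) : wpow v 1 = v := by
  simp [wpow]

theorem wpow_add (v : List A) (m n : ℕ) : wpow v (m + n) = wpow v m ++ wpow v n := by
  simp only [wpow, List.replicate_add, List.flatten_append]

theorem getElem?_wpow {v : List A} {k p : ℕ} (hp : p < k * v.length) :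
    (wpow v k)[p]? = v[p % v.length]? := by
  induction k generalizing p with
  | zero => simp at hp
  | succ k ih =>
    rw [add_comm, wpow_add, wpow_one]
    rcases lt_or_ge p v.length with h | h
    · rw [List.getElem?_append_left h, Nat.mod_eq_of_lt h]
    · rw [List.getElem?_append_right h, ih (by rw [Nat.succ_mul] at hp; omega),
        ← Nat.mod_eq_sub_mod h]

theorem getElem?_wpow_append_take {v : List A} {k r p : ℕ}
    (hp : p < (wpow v k ++ v.take r).length) :
    (wpow v k ++ v.take r)[p]? = v[p % v.length]? := by
  simp only [List.length_append, wpow_length, List.length_take] at hp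
  rcases lt_or_ge p (k * v.length) with h | h
  · rw [List.getElem?_append_left (by rwa [wpow_length]), getElem?_wpow h]
  · rw [List.getElem?_append_right (by rwa [wpow_length]), wpow_length,
      List.getElem?_take_of_lt (by omega),
      ← Nat.mod_eq_of_lt (by omega : p - k * v.length < v.length), mul_comm k, Nat.sub_mul_mod (by rwa [mul_comm])]

theorem append_wpow_rotate_append {B C v : List A} {k r : ℕ} (h : B ++ C = wpow v k ++ v.take r)
    (n : ℕ) : B ++ wpow (v.rotate B.length) n ++ C = wpow v (k + n) ++ v.take r := by
  have hBC (j : ℕ) (hj : j < B.length + C.length) : (B ++ C)[j]? = v[j % v.length]? := by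
    rw [h, getElem?_wpow_append_take (by rw [← h, List.length_append]; exact hj)]
  have hlen : B.length + C.length = k * v.length + min r v.length := by
    simpa [wpow_length] using congrArg List.length h
  apply List.ext_getElem?
  intro i
  by_cases hi : i < (wpow v (k + n) ++ v.take r).length
  swap
  · rw [List.getElem?_eq_none (not_lt.mp hi), List.getElem?_eq_none]
    simp only [List.length_append, wpow_length, List.length_take, List.length_rotate] at hi ⊢
    rw [add_mul] at hi
    omega
  rw [getElem?_wpow_append_take hi]
  simp only [List.length_append, wpow_length, List.length_take] at hi
  rw [add_mul] at hi
  rcases lt_or_ge i B.length with h₁ | h₁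
  · rw [List.append_assoc, List.getElem?_append_left h₁, ← hBC i (by omega),
      List.getElem?_append_left h₁]
  rcases lt_or_ge i (B.length + n * v.length) with h₂ | h₂
  · have hv : 0 < v.length := Nat.pos_of_ne_zero fun h₀ => by simp [h₀] at h₂; omega
    rw [List.getElem?_append_left (by simpa [wpow_length] using h₂), List.getElem?_append_right h₁,
      getElem?_wpow (by simp only [List.length_rotate]; omega), List.length_rotate,
      List.getElem?_rotate (Nat.mod_lt _ hv), Nat.mod_add_mod, Nat.sub_add_cancel h₁]
  · have := hBC (i - n * v.length) (by omega)
    rw [List.getElem?_append_right (by omega), mul_comm n,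
      Nat.sub_mul_mod (by rw [mul_comm]; omega)] at this
    rw [List.getElem?_append_right (by simpa [wpow_length] using h₂), ← this]
    simp only [List.length_append, wpow_length, List.length_rotate]
    congr 1
    rw [mul_comm]
    omega

theorem mem_of_getElem?_wpow {y : List A} {K : ℕ → Set A} (hK : Periodic K y.length)
    (hy : ∀ j a, y[j]? = some a → a ∈ K j) {n i : ℕ} {a : A} (ha : (wpow y n)[i]? = some a) :
    a ∈ K i := by
  have hi := (List.getElem_of_getElem? ha).1
  rw [wpow_length] at hi
  rw [getElem?_wpow hi] at ha
  rw [← hK.map_mod_nat]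
  exact hy _ _ ha

end Words

theorem Function.Periodic.of_add_lt {β : Type*} {f : ℕ → β} {d t : ℕ} (hf : Periodic f d)
    (hd : 0 < d) (htd : t ∣ d) (hstep : ∀ i, i + t < d → f (i + t) = f i) : Periodic f t := by
  have chain : ∀ n a, a + n * t < d → f (a + n * t) = f a := by
    intro n
    induction n with
    | zero => simp
    | succ n ih =>
      intro a ha
      rw [Nat.succ_mul] at ha ⊢
      rw [← add_assoc, hstep _ (by omega), ih a (by omega)]
  intro m
  rw [← hf.map_mod_nat m, ← hf.map_mod_nat (m + t), ← Nat.mod_add_mod]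
  set j := m % d
  have hj : j < d := Nat.mod_lt m hd
  by_cases hwrap : j + t < d
  · rw [Nat.mod_eq_of_lt hwrap, hstep j hwrap]
  have ht : t ≤ d := Nat.le_of_dvd hd htd
  have hdt : (d / t - 1) * t = d - t := by rw [Nat.sub_mul, one_mul, Nat.div_mul_cancel htd]
  rw [Nat.mod_eq_sub_mod (by omega), Nat.mod_eq_of_lt (by omega)]
  -- climbing from `j + t - d` in steps of `t` reaches `j` without leaving `[0, d)`
  conv_rhs => rw [show j = j + t - d + (d / t - 1) * t by omega]
  exact (chain _ _ (by omega)).symm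

section Kappa

variable {A : Type*} {d : ℕ} {v : List A}

theorem kappa_congr {i j : ℕ} (h : i ≡ j [MOD d]) : kappa d v i = kappa d v j := by
  simp only [kappa, show i % d = j % d from h]

theorem kappa_periodic (d : ℕ) (v : List A) : Periodic (kappa d v) d :=
  fun i => kappa_congr (Nat.add_mod_right i d)

theorem kappa_periodic_piD (hd : 0 < d) : Periodic (kappa d v) (piD d v) := by
  obtain ⟨hpd, -, hstep⟩ : piD d v ∈ {t | t ∣ d ∧ 1 ≤ t ∧ ∀ i : ℕ, 1 ≤ i → i + t ≤ d →
      kappa d v (i + t) = kappa d v i} :=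
    Nat.sInf_mem ⟨d, dvd_rfl, hd, fun i hi hid => by omega⟩
  have hshift : Periodic (fun i => kappa d v (i + 1)) (piD d v) := by
    refine Periodic.of_add_lt (fun i => ?_) hd hpd fun i hi => ?_
    · show kappa d v (i + d + 1) = kappa d v (i + 1)
      rw [add_right_comm, kappa_periodic]
    · show kappa d v (i + piD d v + 1) = kappa d v (i + 1)
      rw [add_right_comm, hstep (i + 1) (by omega) (by omega)]
  intro m
  simpa only [show m + d - 1 + piD d v + 1 = m + piD d v + d by omega,
    show m + d - 1 + 1 = m + d by omega, kappa_periodic d v _] using hshift (m + d - 1)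

theorem kappa_periodic_of_piD_dvd (hd : 0 < d) {n : ℕ} (h : piD d v ∣ n) :
    Periodic (kappa d v) n := by
  obtain ⟨c, rfl⟩ := h
  rw [mul_comm]
  exact (kappa_periodic_piD hd).nat_mul c

theorem kappa_wpow_append_take_subset (hv : d ∣ v.length) (k r i : ℕ) :
    kappa d (wpow v k ++ v.take r) i ⊆ kappa d v i := by
  rintro a ⟨p, hp, hres⟩
  refine ⟨p % v.length, ?_, ?_⟩
  · rwa [← getElem?_wpow_append_take ((List.getElem_of_getElem? hp).1)]
  · rw [← hres, Nat.add_mod, Nat.mod_mod_of_dvd _ hv, ← Nat.add_mod]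

theorem kappa_rotate_subset (hv : d ∣ v.length) (n i : ℕ) :
    kappa d (v.rotate n) i ⊆ kappa d v (i + n) := by
  rintro a ⟨p, hp, hres⟩
  have hpv : p < v.length := by simpa using (List.getElem_of_getElem? hp).1
  refine ⟨(p + n) % v.length, by rwa [← List.getElem?_rotate hpv], ?_⟩
  rw [Nat.add_mod, Nat.mod_mod_of_dvd _ hv, ← Nat.add_mod, add_right_comm, Nat.add_mod, hres,
    ← Nat.add_mod]

theorem kappa_rotate (hv : d ∣ v.length) (n i : ℕ) :
    kappa d (v.rotate n) i = kappa d v (i + n) := by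
  refine subset_antisymm (kappa_rotate_subset hv n i) ?_
  by_cases hv0 : v = []
  · simp [hv0, kappa]
  have hpos := List.length_pos_iff.mpr hv0
  obtain ⟨c, hc⟩ := hv
  have hn : n ≤ v.length * n := Nat.le_mul_of_pos_left n hpos
  calc kappa d v (i + n)
      = kappa d ((v.rotate n).rotate (v.length * n - n)) (i + n) := by
        rw [List.rotate_rotate, Nat.add_sub_cancel' hn, List.rotate_length_mul]
    _ ⊆ kappa d (v.rotate n) (i + n + (v.length * n - n)) :=
        kappa_rotate_subset (by simp [hc]) _ _
    _ = kappa d (v.rotate n) i := by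
        rw [add_assoc, Nat.add_sub_cancel' hn, hc, mul_assoc, mul_comm]
        exact (kappa_periodic d _).nat_mul _ i

end Kappa

section ModEmb

variable {A : Type*} {d : ℕ}

theorem modEmb_iff {u T : List A} :
    ModEmb d u T ↔ u.length % d = T.length % d ∧ ∃ f : ℕ → ℕ, StrictMonoOn f (Set.Iio u.length) ∧
      (∀ i < u.length, T[f i]? = u[i]?) ∧ ∀ i < u.length, f i % d = i % d := by
  constructor
  · rintro ⟨hlen, α, hmono, hget, hres⟩
    refine ⟨hlen, fun i => if h : i < u.length then α ⟨i, h⟩ else 0, ?_, fun i hi => ?_,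
      fun i hi => ?_⟩
    · intro i hi j hj hij
      simp only [Set.mem_Iio] at hi hj
      simp only [dif_pos hi, dif_pos hj, Fin.val_fin_lt]
      exact hmono (show (⟨i, hi⟩ : Fin _) < ⟨j, hj⟩ from hij)
    · simp only [dif_pos hi, List.getElem?_eq_getElem hi, List.getElem?_eq_getElem (α _).2]
      exact congrArg some (hget ⟨i, hi⟩).symm
    · simpa [dif_pos hi] using hres ⟨i, hi⟩
  · rintro ⟨hlen, f, hmono, hget, hres⟩
    have hlt (i : ℕ) (hi : i < u.length) : f i < T.length :=
      (List.getElem_of_getElem? ((hget i hi).trans (List.getElem?_eq_getElem hi))).1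
    refine ⟨hlen, fun i => ⟨f i, hlt i i.2⟩, fun i j hij => hmono i.2 j.2 hij, fun i => ?_,
      fun i => hres i i.2⟩
    have := hget i i.2
    rw [List.getElem?_eq_getElem (hlt i i.2), List.getElem?_eq_getElem i.2] at this
    exact (Option.some.inj this).symm

theorem ModEmb.mem_kappa {u T : List A} (h : ModEmb d u T) {i : ℕ} {a : A} (ha : u[i]? = some a) :
    a ∈ kappa d T (i + 1) := by
  obtain ⟨-, f, -, hget, hres⟩ := modEmb_iff.mp h
  have hi := (List.getElem_of_getElem? ha).1
  exact ⟨f i, (hget i hi).trans ha, by rw [Nat.add_mod, hres i hi, ← Nat.add_mod]⟩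

theorem ModEmb.append {u₁ u₂ T₁ T₂ : List A} (h₁ : ModEmb d u₁ T₁) (h₂ : ModEmb d u₂ T₂) :
    ModEmb d (u₁ ++ u₂) (T₁ ++ T₂) := by
  obtain ⟨hlen₁, f₁, hmono₁, hget₁, hres₁⟩ := modEmb_iff.mp h₁
  obtain ⟨hlen₂, f₂, hmono₂, hget₂, hres₂⟩ := modEmb_iff.mp h₂
  have hlt₁ (i : ℕ) (hi : i < u₁.length) : f₁ i < T₁.length :=
    (List.getElem_of_getElem? ((hget₁ i hi).trans (List.getElem?_eq_getElem hi))).1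
  refine modEmb_iff.mpr ⟨?_,
    fun i => if i < u₁.length then f₁ i else T₁.length + f₂ (i - u₁.length), ?_,
    fun i hi => ?_, fun i hi => ?_⟩
  · simp only [List.length_append]
    exact Nat.ModEq.add hlen₁ hlen₂
  · intro i hi j hj hij
    simp only [Set.mem_Iio, List.length_append] at hi hj
    by_cases hj₁ : j < u₁.length
    · simp only [if_pos hj₁, if_pos (hij.trans hj₁)]
      exact hmono₁ (hij.trans hj₁) hj₁ hij
    by_cases hi₁ : i < u₁.length
    · simp only [if_pos hi₁, if_neg hj₁]
      linarith [hlt₁ i hi₁]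
    · simp only [if_neg hi₁, if_neg hj₁, add_lt_add_iff_left]
      exact hmono₂ (Set.mem_Iio.mpr (by omega)) (Set.mem_Iio.mpr (by omega)) (by omega)
  · simp only [List.length_append] at hi
    by_cases hi₁ : i < u₁.length
    · simp only [if_pos hi₁]
      rw [List.getElem?_append_left (hlt₁ i hi₁), List.getElem?_append_left hi₁, hget₁ i hi₁]
    · simp only [if_neg hi₁]
      rw [List.getElem?_append_right (by omega), List.getElem?_append_right (by omega),
        Nat.add_sub_cancel_left, hget₂ _ (by omega)]
  · simp only [List.length_append] at hi
    by_cases hi₁ : i < u₁.length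
    · simp only [if_pos hi₁]
      exact hres₁ i hi₁
    · simp only [if_neg hi₁]
      have := Nat.ModEq.add hlen₁.symm (hres₂ (i - u₁.length) (by omega))
      rwa [Nat.add_sub_cancel' (by omega)] at this

theorem modEmb_nil_nil : ModEmb d ([] : List A) [] :=
  modEmb_iff.mpr ⟨rfl, id, strictMono_id.strictMonoOn _, by simp⟩

theorem ModEmb.exists_split {u₁ u₂ T : List A} (h : ModEmb d (u₁ ++ u₂) T) :
    ∃ T₁ T₂, T = T₁ ++ T₂ ∧ ModEmb d u₁ T₁ ∧ ModEmb d u₂ T₂ := by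
  by_cases hu₁ : u₁ = []
  · subst hu₁
    exact ⟨[], T, rfl, modEmb_nil_nil, h⟩
  have hpos := List.length_pos_iff.mpr hu₁
  obtain ⟨hlen, f, hmono, hget, hres⟩ := modEmb_iff.mp h
  simp only [List.length_append] at hlen hmono hget hres
  -- cut `T` just after the image of the last letter of `u₁`
  set c := f (u₁.length - 1) + 1
  have hcT : c ≤ T.length :=
    (List.getElem_of_getElem?
      ((hget _ (by omega)).trans (List.getElem?_eq_getElem (by simp; omega)))).1
  have hc_mod : c ≡ u₁.length [MOD d] := by
    have := Nat.ModEq.add_right 1 (hres (u₁.length - 1) (by omega))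
    rwa [Nat.sub_add_cancel hpos] at this
  have hlt (i : ℕ) (hi : i < u₁.length) : f i < c :=
    Nat.lt_succ_of_le <| (hmono.le_iff_le (by simp; omega) (by simp; omega)).mpr (by omega)
  have hge (i : ℕ) (hi : i < u₂.length) : c ≤ f (u₁.length + i) :=
    hmono (by simp; omega) (by simp; omega) (by omega)
  refine ⟨T.take c, T.drop c, (List.take_append_drop c T).symm,
    modEmb_iff.mpr ⟨?_, f, hmono.mono (Set.Iio_subset_Iio (by omega)), fun i hi => ?_,
      fun i hi => hres i (by omega)⟩,
    modEmb_iff.mpr ⟨?_, fun i => f (u₁.length + i) - c, fun i hi j hj hij => ?_, fun i hi => ?_,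
      fun i hi => ?_⟩⟩
  · rw [List.length_take, min_eq_left hcT]
    exact hc_mod.symm
  · rw [List.getElem?_take_of_lt (hlt i hi), hget i (by omega), List.getElem?_append_left hi]
  · rw [List.length_drop]
    refine Nat.ModEq.add_left_cancel hc_mod.symm ?_
    rwa [Nat.add_sub_cancel' hcT]
  · simp only [Set.mem_Iio] at hi hj
    show f (u₁.length + i) - c < f (u₁.length + j) - c
    have := hmono (by simp; omega) (by simp; omega) (by omega : u₁.length + i < u₁.length + j)
    have := hge i hi
    omega
  · rw [List.getElem?_drop, Nat.add_sub_cancel' (hge i hi), hget _ (by omega),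
      List.getElem?_append_right (by omega), Nat.add_sub_cancel_left]
  · refine Nat.ModEq.add_left_cancel hc_mod ?_
    rw [Nat.add_sub_cancel' (hge i hi)]
    exact hres _ (by omega)

theorem modEmb_wpow_of_mem_kappa {u V : List A} (hV : d ∣ V.length) (hu : d ∣ u.length)
    (hmem : ∀ i a, u[i]? = some a → a ∈ kappa d V (i + 1)) : ModEmb d u (wpow V u.length) := by
  have hpos (i : ℕ) : ∃ q, i < u.length → V[q]? = u[i]? ∧ q % d = i % d := by
    by_cases hi : i < u.length
    · obtain ⟨q, hq, hres⟩ := hmem i _ (List.getElem?_eq_getElem hi)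
      exact ⟨q, fun _ => ⟨by rw [hq, List.getElem?_eq_getElem hi],
        Nat.ModEq.add_right_cancel' 1 hres⟩⟩
    · exact ⟨0, fun h => absurd h hi⟩
  choose p hp using hpos
  have hpV (i : ℕ) (hi : i < u.length) : p i < V.length :=
    (List.getElem_of_getElem? (((hp i hi).1).trans (List.getElem?_eq_getElem hi))).1
  -- the `i`-th letter goes into the `i`-th copy of `V`
  refine modEmb_iff.mpr ⟨?_, fun i => i * V.length + p i, fun i hi j hj hij => ?_,
    fun i hi => ?_, fun i hi => ?_⟩
  · rw [wpow_length, Nat.mod_eq_zero_of_dvd hu, Nat.mod_eq_zero_of_dvd (dvd_mul_of_dvd_left hu _)]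
  · simp only [Set.mem_Iio] at hi hj
    calc i * V.length + p i < (i + 1) * V.length := by rw [Nat.succ_mul]; linarith [hpV i hi]
      _ ≤ j * V.length := Nat.mul_le_mul_right _ hij
      _ ≤ j * V.length + p j := Nat.le_add_right _ _
  · have hbound : i * V.length + p i < u.length * V.length :=
      calc i * V.length + p i < (i + 1) * V.length := by rw [Nat.succ_mul]; linarith [hpV i hi]
        _ ≤ u.length * V.length := Nat.mul_le_mul_right _ hi
    rw [getElem?_wpow hbound, mul_comm, Nat.mul_add_mod, Nat.mod_eq_of_lt (hpV i hi), (hp i hi).1]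
  · obtain ⟨c, hc⟩ := hV
    show (i * V.length + p i) % d = i % d
    rw [hc, mul_left_comm, Nat.mul_add_mod, (hp i hi).2]

end ModEmb

theorem pump_inside_ideal_ext_general {A : Type*} (d : ℕ) (hd : 1 ≤ d)
    (r : ℕ) (v x y z : List A) (hv : d ∣ v.length)
    (hper : piD d v ∣ y.length) (hdiv : y.length ∣ d)
    (hxyz : x ++ y ++ z ∈ dclMod d {u | ∃ k : ℕ, u = wpow v k ++ v.take r}) :
    ∀ l : ℕ,
      x ++ wpow y (1 + l * (d / y.length)) ++ z ∈
        dclMod d {u | ∃ k : ℕ, u = wpow v k ++ v.take r} := by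
  intro l
  obtain ⟨_, ⟨k, rfl⟩, hemb⟩ := hxyz
  obtain ⟨T₁, T₂, hT, hxy, hz⟩ := hemb.exists_split
  set u := wpow y (l * (d / y.length))
  have hu : u.length = l * d := by rw [wpow_length, mul_assoc, Nat.div_mul_cancel hdiv]
  have hy_period := kappa_periodic_of_piD_dvd hd hper
  have hy_letters (j : ℕ) (a : A) (ha : y[j]? = some a) : a ∈ kappa d v (j + (x.length + 1)) := by
    have hj := (List.getElem_of_getElem? ha).1
    have hxyz_a : (x ++ y ++ z)[x.length + j]? = some a := by
      rw [List.getElem?_append_left (by simp; omega), List.getElem?_append_right (by omega),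
        Nat.add_sub_cancel_left, ha]
    rw [← add_assoc, add_comm j]
    exact kappa_wpow_append_take_subset hv k r _ (hemb.mem_kappa hxyz_a)
  have hpump : ModEmb d u (wpow (v.rotate T₁.length) u.length) := by
    refine modEmb_wpow_of_mem_kappa (by rwa [List.length_rotate]) (hu ▸ dvd_mul_left d l)
      fun i a ha => ?_
    have hres : i + 1 + T₁.length ≡ i + (x.length + 1) + y.length [MOD d] :=
      calc i + 1 + T₁.length ≡ i + 1 + (x ++ y).length [MOD d] := Nat.ModEq.add_left _ hxy.1.symm
        _ = i + (x.length + 1) + y.length := by rw [List.length_append]; ring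
    rw [kappa_rotate hv, kappa_congr hres, hy_period]
    exact mem_of_getElem?_wpow (hy_period.add_const _) hy_letters ha
  refine ⟨_, ⟨k + u.length, append_wpow_rotate_append hT.symm u.length⟩, ?_⟩
  rw [wpow_add, wpow_one, ← List.append_assoc x]
  exact (hxy.append hpump).append hz

theorem pump_inside_ideal_ext {A : Type*} (d : ℕ) (hd : 1 ≤ d)
    (r : ℕ) (hr : r < d) (v x y z : List A) (hv : d ∣ v.length)
    (hy : y ≠ []) (hper : piD d v ∣ y.length) (hdiv : y.length ∣ d)
    (hxyz : x ++ y ++ z ∈ dclMod d {u | ∃ k : ℕ, u = wpow v k ++ v.take r}) :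
    ∀ l : ℕ,
      x ++ wpow y (1 + l * (d / y.length)) ++ z ∈
        dclMod d {u | ∃ k : ℕ, u = wpow v k ++ v.take r} :=
  pump_inside_ideal_ext_general d hd r v x y z hv hper hdiv hxyz
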